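/- Let a, b, c ∈ ℂ with Re(a) > 0, Re(b) > 0, Re(c) > 0, let σ ∈ ℂ, and let Î_n(x;a,b,c) be the generalized symmetric Bannai–Ito polynomials. Then for every n ∈ ℕ and every x ∈ ℂ with 2ix ≠ 1 and 2ix ≠ −1, B(x)·Î_n(x+i) + A(x)·Î_n(x−i) + C(x)·Î_n(−x) − (A(x)+B(x)+C(x))·Î_n(x) + (σ/2)·(Î_n(x) − Î_n(−x)) = Λ_n^{(σ)}·Î_n(x), where A(x) = (ix+a)(ix+b)(ix+c)/(2(2ix+1)), B(x) = (ix−a)(ix−b)(ix−c)/(2(2ix−1)), C(x) = (ab+ac+bc−x²)/2 − A(x) − B(x), and Λ_{2m}^{(σ)} = m² + (a+b+c−1)m, Λ_{2m+1}^{(σ)} = m² + (a+b+c)m + σ. -/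
import Mathlib


open Polynomial Finset Complex

/-- The Pochhammer symbol `(a)ₖ = a(a+1)⋯(a+k-1)` for complex `a`. -/
noncomputable def pochC (a : ℂ) (k : ℕ) : ℂ := (ascPochhammer ℂ k).eval a

/-- The generalized symmetric Bannai–Ito polynomials `Îₙ(x;a,b,c)`, given by their
Wilson-type terminating ₄F₃ hypergeometric expressions. -/
noncomputable def gsBI (a b c : ℂ) (n : ℕ) : Polynomial ℂ :=
  let m : ℕ := n / 2
  if Even n then
    C ((-1 : ℂ) ^ m * pochC a m * pochC b m * pochC c m /
        pochC ((m : ℂ) + a + b + c - 1) m) *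
      ∑ k ∈ range (m + 1),
        C (pochC (-(m : ℂ)) k * pochC ((m : ℂ) + a + b + c - 1) k /
            (pochC a k * pochC b k * pochC c k * (k.factorial : ℂ))) *
          ∏ j ∈ range k, (C ((j : ℂ) ^ 2) + X ^ 2)
  else
    C ((-1 : ℂ) ^ m * pochC (1 + a) m * pochC (1 + b) m * pochC (1 + c) m /
        pochC ((m : ℂ) + a + b + c) m) * X *
      ∑ k ∈ range (m + 1),
        C (pochC (-(m : ℂ)) k * pochC ((m : ℂ) + a + b + c) k /
            (pochC (1 + a) k * pochC (1 + b) k * pochC (1 + c) k * (k.factorial : ℂ))) *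
          ∏ j ∈ Icc 1 k, (C ((j : ℂ) ^ 2) + X ^ 2)

/-- The eigenvalues `Λₙ⁽ᶜ⁾` of the Dunkl-type operator `D_σ` on the generalized
symmetric Bannai–Ito polynomials. -/
noncomputable def gsBIeigen (a b c σ : ℂ) (n : ℕ) : ℂ :=
  let m : ℕ := n / 2
  if Even n then (m : ℂ) ^ 2 + (a + b + c - 1) * m
  else (m : ℂ) ^ 2 + (a + b + c) * m + σ

lemma pochC_zero (a : ℂ) : pochC a 0 = 1 := by simp [pochC]

lemma pochC_succ (a : ℂ) (k : ℕ) : pochC a (k+1) = pochC a k * (a + k) := by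
  simp [pochC, ascPochhammer_succ_right]

lemma pochC_ne_zero {a : ℂ} (k : ℕ) (h : ∀ j : ℕ, j < k → a + j ≠ 0) : pochC a k ≠ 0 := by
  induction k with
  | zero => simp [pochC_zero]
  | succ k ih =>
    rw [pochC_succ]
    exact mul_ne_zero (ih fun j hj => h j (by omega)) (h k (by omega))

lemma pochC_ne_zero_of_pos_re {a : ℂ} (ha : 0 < a.re) (k : ℕ) : pochC a k ≠ 0 := by
  refine pochC_ne_zero k fun j _ => ?_
  intro h
  have := congrArg Complex.re h
  simp [Complex.add_re] at this
  have : a.re = -(j:ℝ) := by linarith [this]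
  have hj : (0:ℝ) ≤ (j:ℝ) := Nat.cast_nonneg j
  linarith

lemma add_nat_ne_zero {a : ℂ} (ha : 0 < a.re) (k : ℕ) : a + (k:ℂ) ≠ 0 := by
  intro h
  have := congrArg Complex.re h
  simp [Complex.add_re] at this
  have hj : (0:ℝ) ≤ (k:ℝ) := Nat.cast_nonneg k
  linarith

lemma prod_Icc_one (f : ℕ → ℂ) (k : ℕ) : ∏ j ∈ Icc 1 k, f j = ∏ j ∈ range k, f (j+1) := by
  induction k with
  | zero => simp
  | succ k ih =>
    rw [prod_Icc_succ_top (by omega), ih, prod_range_succ]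


lemma evenFactP (x : ℂ) (k : ℕ) :
    ∏ j ∈ range k, ((j:ℂ)^2 + x^2)
      = (∏ j ∈ range k, ((j:ℂ) - I*x)) * (∏ j ∈ range k, ((j:ℂ) + I*x)) := by
  rw [← prod_mul_distrib]
  refine prod_congr rfl fun j _ => ?_
  linear_combination (x^2) * Complex.I_sq

lemma keyShift (x : ℂ) (k : ℕ) :
    (-(I*x)) * ∏ j ∈ range k, ((j:ℂ) + 1 - I*x)
      = ((k:ℂ) - I*x) * ∏ j ∈ range k, ((j:ℂ) - I*x) := by
  have A := prod_range_succ' (fun j : ℕ => (j:ℂ) - I*x) k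
  have B := prod_range_succ (fun j : ℕ => (j:ℂ) - I*x) k
  have e : ∏ j ∈ range k, ((((j:ℕ)+1 : ℕ):ℂ) - I*x) = ∏ j ∈ range k, ((j:ℂ) + 1 - I*x) := by
    refine prod_congr rfl fun j _ => ?_
    push_cast; ring
  rw [e] at A
  simp only [Nat.cast_zero] at A
  rw [B] at A
  linear_combination -A

lemma keyShift' (x : ℂ) (k : ℕ) :
    (I*x) * ∏ j ∈ range k, ((j:ℂ) + 1 + I*x)
      = ((k:ℂ) + I*x) * ∏ j ∈ range k, ((j:ℂ) + I*x) := by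
  have A := prod_range_succ' (fun j : ℕ => (j:ℂ) + I*x) k
  have B := prod_range_succ (fun j : ℕ => (j:ℂ) + I*x) k
  have e : ∏ j ∈ range k, ((((j:ℕ)+1 : ℕ):ℂ) + I*x) = ∏ j ∈ range k, ((j:ℂ) + 1 + I*x) := by
    refine prod_congr rfl fun j _ => ?_
    push_cast; ring
  rw [e] at A
  simp only [Nat.cast_zero] at A
  rw [B] at A
  linear_combination -A

lemma evenShiftQ (x : ℂ) (k : ℕ) :
    (-(I*x)) * ∏ j ∈ range (k+1), ((j:ℂ)^2 + (x+I)^2)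
      = ((k:ℂ)+1-I*x) * ((k:ℂ)-I*x) * (I*x-1) *
          ((∏ j ∈ range k, ((j:ℂ) - I*x)) * (∏ j ∈ range k, ((j:ℂ) + I*x))) := by
  have hf : ∏ j ∈ range (k+1), ((j:ℂ)^2+(x+I)^2)
      = (∏ j ∈ range (k+1), ((j:ℂ)+1-I*x)) * (∏ j ∈ range (k+1), ((j:ℂ)+(I*x-1))) := by
    rw [← prod_mul_distrib]
    refine prod_congr rfl fun j _ => ?_
    linear_combination (1+x^2) * Complex.I_sq
  have hu : ∏ j ∈ range (k+1), ((j:ℂ)+1-I*x)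
      = (∏ j ∈ range k, ((j:ℂ)+1-I*x)) * ((k:ℂ)+1-I*x) :=
    prod_range_succ _ k
  have hv : ∏ j ∈ range (k+1), ((j:ℂ)+(I*x-1)) = (I*x-1) * ∏ j ∈ range k, ((j:ℂ)+I*x) := by
    have A := prod_range_succ' (fun j : ℕ => (j:ℂ) + (I*x-1)) k
    have e : ∏ j ∈ range k, ((((j:ℕ)+1:ℕ):ℂ) + (I*x-1)) = ∏ j ∈ range k, ((j:ℂ)+I*x) := by
      refine prod_congr rfl fun j _ => ?_; push_cast; ring
    rw [e] at A
    simp only [Nat.cast_zero] at A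
    rw [A]; ring
  rw [hf, hu, hv]
  linear_combination (((k:ℂ)+1-I*x)*(I*x-1)*(∏ j ∈ range k, ((j:ℂ)+I*x))) * keyShift x k

lemma evenShiftR (x : ℂ) (k : ℕ) :
    (I*x) * ∏ j ∈ range (k+1), ((j:ℂ)^2 + (x-I)^2)
      = (-(I*x)-1) * ((k:ℂ)+1+I*x) * ((k:ℂ)+I*x) *
          ((∏ j ∈ range k, ((j:ℂ) - I*x)) * (∏ j ∈ range k, ((j:ℂ) + I*x))) := by
  have hf : ∏ j ∈ range (k+1), ((j:ℂ)^2+(x-I)^2)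
      = (∏ j ∈ range (k+1), ((j:ℂ)+(-(I*x)-1))) * (∏ j ∈ range (k+1), ((j:ℂ)+1+I*x)) := by
    rw [← prod_mul_distrib]
    refine prod_congr rfl fun j _ => ?_
    linear_combination (1+x^2) * Complex.I_sq
  have hu : ∏ j ∈ range (k+1), ((j:ℂ)+(-(I*x)-1)) = (-(I*x)-1) * ∏ j ∈ range k, ((j:ℂ)-I*x) := by
    have A := prod_range_succ' (fun j : ℕ => (j:ℂ) + (-(I*x)-1)) k
    have e : ∏ j ∈ range k, ((((j:ℕ)+1:ℕ):ℂ) + (-(I*x)-1)) = ∏ j ∈ range k, ((j:ℂ)-I*x) := by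
      refine prod_congr rfl fun j _ => ?_; push_cast; ring
    rw [e] at A
    simp only [Nat.cast_zero] at A
    rw [A]; ring
  have hv : ∏ j ∈ range (k+1), ((j:ℂ)+1+I*x)
      = (∏ j ∈ range k, ((j:ℂ)+1+I*x)) * ((k:ℂ)+1+I*x) :=
    prod_range_succ _ k
  rw [hf, hu, hv]
  linear_combination ((-(I*x)-1)*((k:ℂ)+1+I*x)*(∏ j ∈ range k, ((j:ℂ)-I*x))) * keyShift' x k

lemma evenP1 (x : ℂ) (k : ℕ) :
    ∏ j ∈ range (k+1), ((j:ℂ)^2+x^2)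
      = ((k:ℂ)-I*x) * ((k:ℂ)+I*x) *
          ((∏ j ∈ range k, ((j:ℂ) - I*x)) * (∏ j ∈ range k, ((j:ℂ) + I*x))) := by
  rw [prod_range_succ, evenFactP]
  linear_combination ((x^2) * ((∏ j ∈ range k, ((j:ℂ) - I*x)) * (∏ j ∈ range k, ((j:ℂ) + I*x)))) * Complex.I_sq

set_option maxHeartbeats 4000000 in
lemma evenKeyGen (a b c x : ℂ) (k : ℕ) (hy : I*x ≠ 0) :
    2*(2*I*x+1) * ((I*x-a)*(I*x-b)*(I*x-c)) *
        ((∏ j ∈ range (k+1), ((j:ℂ)^2+(x+I)^2)) - ∏ j ∈ range (k+1), ((j:ℂ)^2+x^2))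
      + 2*(2*I*x-1) * ((I*x+a)*(I*x+b)*(I*x+c)) *
        ((∏ j ∈ range (k+1), ((j:ℂ)^2+(x-I)^2)) - ∏ j ∈ range (k+1), ((j:ℂ)^2+x^2))
      = (2*(2*I*x+1)) * (2*(2*I*x-1)) *
        (((k:ℂ)+1)*((k:ℂ)+a+b+c) * ∏ j ∈ range (k+1), ((j:ℂ)^2+x^2)
          - ((k:ℂ)+1)*((k:ℂ)+a)*((k:ℂ)+b)*((k:ℂ)+c) * ∏ j ∈ range k, ((j:ℂ)^2+x^2)) := by
  refine mul_left_cancel₀ hy ?_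
  have h1 : ∀ u : ℂ, (I*x) * (u / (-(I*x))) = -u := fun u => by
    rw [div_neg, mul_neg, mul_comm, div_mul_cancel₀ _ hy]
  have hQ' : ∏ j ∈ range (k+1), ((j:ℂ)^2+(x+I)^2)
      = (((k:ℂ)+1-I*x) * ((k:ℂ)-I*x) * (I*x-1) *
          ((∏ j ∈ range k, ((j:ℂ) - I*x)) * (∏ j ∈ range k, ((j:ℂ) + I*x)))) / (-(I*x)) := by
    rw [eq_div_iff (neg_ne_zero.mpr hy)]
    linear_combination evenShiftQ x k
  have hR' : ∏ j ∈ range (k+1), ((j:ℂ)^2+(x-I)^2)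
      = (((-(I*x))-1) * ((k:ℂ)+1+I*x) * ((k:ℂ)+I*x) *
          ((∏ j ∈ range k, ((j:ℂ) - I*x)) * (∏ j ∈ range k, ((j:ℂ) + I*x)))) / (I*x) := by
    rw [eq_div_iff hy]
    linear_combination evenShiftR x k
  rw [hQ', hR', evenP1, evenFactP]
  have h2 : ∀ u : ℂ, (I*x) * (u / (I*x)) = u := fun u => by
    rw [mul_comm, div_mul_cancel₀ _ hy]
  linear_combination
    (2*(2*I*x+1) * ((I*x-a)*(I*x-b)*(I*x-c))) *
      h1 (((k:ℂ)+1-I*x) * ((k:ℂ)-I*x) * (I*x-1) *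
          ((∏ j ∈ range k, ((j:ℂ) - I*x)) * (∏ j ∈ range k, ((j:ℂ) + I*x))))
    + (2*(2*I*x-1) * ((I*x+a)*(I*x+b)*(I*x+c))) *
      h2 (((-(I*x))-1) * ((k:ℂ)+1+I*x) * ((k:ℂ)+I*x) *
          ((∏ j ∈ range k, ((j:ℂ) - I*x)) * (∏ j ∈ range k, ((j:ℂ) + I*x))))

lemma injNat : Function.Injective (fun n : ℕ => ((n:ℂ)+1)) := by
  intro m n h
  simp only [add_left_inj, Nat.cast_inj] at h
  exact h

lemma genNe (n : ℕ) : I * ((n:ℂ)+1) ≠ 0 :=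
  mul_ne_zero I_ne_zero (Nat.cast_add_one_ne_zero n)

set_option maxHeartbeats 1000000 in
lemma evenKeyAll (a b c : ℂ) (k : ℕ) (x : ℂ) :
    2*(2*I*x+1) * ((I*x-a)*(I*x-b)*(I*x-c)) *
        ((∏ j ∈ range (k+1), ((j:ℂ)^2+(x+I)^2)) - ∏ j ∈ range (k+1), ((j:ℂ)^2+x^2))
      + 2*(2*I*x-1) * ((I*x+a)*(I*x+b)*(I*x+c)) *
        ((∏ j ∈ range (k+1), ((j:ℂ)^2+(x-I)^2)) - ∏ j ∈ range (k+1), ((j:ℂ)^2+x^2))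
      = (2*(2*I*x+1)) * (2*(2*I*x-1)) *
        (((k:ℂ)+1)*((k:ℂ)+a+b+c) * ∏ j ∈ range (k+1), ((j:ℂ)^2+x^2)
          - ((k:ℂ)+1)*((k:ℂ)+a)*((k:ℂ)+b)*((k:ℂ)+c) * ∏ j ∈ range k, ((j:ℂ)^2+x^2)) := by
  set p : Polynomial ℂ :=
    2*(2*Polynomial.C I*X+1) * ((Polynomial.C I*X-Polynomial.C a)*(Polynomial.C I*X-Polynomial.C b)*(Polynomial.C I*X-Polynomial.C c)) *
        ((∏ j ∈ range (k+1), (Polynomial.C ((j:ℂ)^2)+(X+Polynomial.C I)^2)) - ∏ j ∈ range (k+1), (Polynomial.C ((j:ℂ)^2)+X^2))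
      + 2*(2*Polynomial.C I*X-1) * ((Polynomial.C I*X+Polynomial.C a)*(Polynomial.C I*X+Polynomial.C b)*(Polynomial.C I*X+Polynomial.C c)) *
        ((∏ j ∈ range (k+1), (Polynomial.C ((j:ℂ)^2)+(X-Polynomial.C I)^2)) - ∏ j ∈ range (k+1), (Polynomial.C ((j:ℂ)^2)+X^2))
      - (2*(2*Polynomial.C I*X+1)) * (2*(2*Polynomial.C I*X-1)) *
        (Polynomial.C (((k:ℂ)+1)*((k:ℂ)+a+b+c)) * ∏ j ∈ range (k+1), (Polynomial.C ((j:ℂ)^2)+X^2)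
          - Polynomial.C (((k:ℂ)+1)*((k:ℂ)+a)*((k:ℂ)+b)*((k:ℂ)+c)) * ∏ j ∈ range k, (Polynomial.C ((j:ℂ)^2)+X^2)) with hp
  have hev : ∀ z : ℂ, p.eval z =
      2*(2*I*z+1) * ((I*z-a)*(I*z-b)*(I*z-c)) *
        ((∏ j ∈ range (k+1), ((j:ℂ)^2+(z+I)^2)) - ∏ j ∈ range (k+1), ((j:ℂ)^2+z^2))
      + 2*(2*I*z-1) * ((I*z+a)*(I*z+b)*(I*z+c)) *
        ((∏ j ∈ range (k+1), ((j:ℂ)^2+(z-I)^2)) - ∏ j ∈ range (k+1), ((j:ℂ)^2+z^2))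
      - (2*(2*I*z+1)) * (2*(2*I*z-1)) *
        (((k:ℂ)+1)*((k:ℂ)+a+b+c) * ∏ j ∈ range (k+1), ((j:ℂ)^2+z^2)
          - ((k:ℂ)+1)*((k:ℂ)+a)*((k:ℂ)+b)*((k:ℂ)+c) * ∏ j ∈ range k, ((j:ℂ)^2+z^2)) := by
    intro z
    simp only [hp, eval_add, eval_sub, eval_mul, eval_pow, eval_prod, eval_C, eval_X,
      eval_ofNat, eval_one]
  have hp0 : p = 0 := by
    apply Polynomial.eq_zero_of_infinite_isRoot
    apply Set.infinite_of_injective_forall_mem injNat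
    intro n
    show p.IsRoot ((n:ℂ)+1)
    rw [Polynomial.IsRoot, hev]
    rw [sub_eq_zero]
    exact evenKeyGen a b c ((n:ℂ)+1) k (genNe n)
  have := hev x
  rw [hp0] at this
  simp only [eval_zero] at this
  linear_combination -this

lemma oddFactq (x : ℂ) (k : ℕ) :
    ∏ j ∈ range k, (((j:ℂ)+1)^2 + x^2)
      = (∏ j ∈ range k, ((j:ℂ)+1 - I*x)) * (∏ j ∈ range k, ((j:ℂ)+1 + I*x)) := by
  rw [← prod_mul_distrib]
  refine prod_congr rfl fun j _ => ?_
  linear_combination (x^2) * Complex.I_sq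

lemma oddq1 (x : ℂ) (k : ℕ) :
    ∏ j ∈ range (k+1), (((j:ℂ)+1)^2 + x^2)
      = ((k:ℂ)+1-I*x) * (((k:ℂ)+1+I*x) *
          ((∏ j ∈ range k, ((j:ℂ)+1 - I*x)) * (∏ j ∈ range k, ((j:ℂ)+1 + I*x)))) := by
  rw [prod_range_succ, oddFactq]
  linear_combination ((x^2) * ((∏ j ∈ range k, ((j:ℂ)+1 - I*x)) * (∏ j ∈ range k, ((j:ℂ)+1 + I*x)))) * Complex.I_sq

lemma oddShiftQ (x : ℂ) (k : ℕ) :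
    (1 - I*x) * ∏ j ∈ range (k+1), (((j:ℂ)+1)^2 + (x+I)^2)
      = ((k:ℂ)+2-I*x) * (((k:ℂ)+1-I*x) *
          ((∏ j ∈ range k, ((j:ℂ)+1 - I*x)) * ((I*x) * ∏ j ∈ range k, ((j:ℂ)+1 + I*x)))) := by
  have hf : ∏ j ∈ range (k+1), (((j:ℂ)+1)^2+(x+I)^2)
      = (∏ j ∈ range (k+1), ((j:ℂ)+(2-I*x))) * (∏ j ∈ range (k+1), ((j:ℂ)+I*x)) := by
    rw [← prod_mul_distrib]
    refine prod_congr rfl fun j _ => ?_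
    linear_combination (1+x^2) * Complex.I_sq
  have hA : (1-I*x) * ∏ j ∈ range (k+1), ((j:ℂ)+(2-I*x))
      = ((k:ℂ)+2-I*x) * (((k:ℂ)+1-I*x) * ∏ j ∈ range k, ((j:ℂ)+1-I*x)) := by
    have A := prod_range_succ' (fun j : ℕ => (j:ℂ)+1-I*x) (k+1)
    have B := prod_range_succ (fun j : ℕ => (j:ℂ)+1-I*x) (k+1)
    have C := prod_range_succ (fun j : ℕ => (j:ℂ)+1-I*x) k
    have e : ∏ j ∈ range (k+1), ((((j:ℕ)+1:ℕ):ℂ)+1-I*x) = ∏ j ∈ range (k+1), ((j:ℂ)+(2-I*x)) := by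
      refine prod_congr rfl fun j _ => ?_; push_cast; ring
    rw [e] at A
    simp only [Nat.cast_zero] at A
    rw [B, C] at A
    push_cast at A ⊢
    linear_combination -A
  have hB : ∏ j ∈ range (k+1), ((j:ℂ)+I*x) = (I*x) * ∏ j ∈ range k, ((j:ℂ)+1+I*x) := by
    have A := prod_range_succ' (fun j : ℕ => (j:ℂ)+I*x) k
    have e : ∏ j ∈ range k, ((((j:ℕ)+1:ℕ):ℂ)+I*x) = ∏ j ∈ range k, ((j:ℂ)+1+I*x) := by
      refine prod_congr rfl fun j _ => ?_; push_cast; ring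
    rw [e] at A
    simp only [Nat.cast_zero] at A
    rw [A]; ring
  rw [hf, hB]
  linear_combination ((I*x) * (∏ j ∈ range k, ((j:ℂ)+1+I*x))) * hA

lemma oddShiftR (x : ℂ) (k : ℕ) :
    (1 + I*x) * ∏ j ∈ range (k+1), (((j:ℂ)+1)^2 + (x-I)^2)
      = (-(I*x)) * ((∏ j ∈ range k, ((j:ℂ)+1 - I*x)) *
          (((k:ℂ)+2+I*x) * (((k:ℂ)+1+I*x) * ∏ j ∈ range k, ((j:ℂ)+1 + I*x)))) := by
  have hf : ∏ j ∈ range (k+1), (((j:ℂ)+1)^2+(x-I)^2)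
      = (∏ j ∈ range (k+1), ((j:ℂ)-I*x)) * (∏ j ∈ range (k+1), ((j:ℂ)+(2+I*x))) := by
    rw [← prod_mul_distrib]
    refine prod_congr rfl fun j _ => ?_
    linear_combination (1+x^2) * Complex.I_sq
  have hA : (1+I*x) * ∏ j ∈ range (k+1), ((j:ℂ)+(2+I*x))
      = ((k:ℂ)+2+I*x) * (((k:ℂ)+1+I*x) * ∏ j ∈ range k, ((j:ℂ)+1+I*x)) := by
    have A := prod_range_succ' (fun j : ℕ => (j:ℂ)+1+I*x) (k+1)
    have B := prod_range_succ (fun j : ℕ => (j:ℂ)+1+I*x) (k+1)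
    have C := prod_range_succ (fun j : ℕ => (j:ℂ)+1+I*x) k
    have e : ∏ j ∈ range (k+1), ((((j:ℕ)+1:ℕ):ℂ)+1+I*x) = ∏ j ∈ range (k+1), ((j:ℂ)+(2+I*x)) := by
      refine prod_congr rfl fun j _ => ?_; push_cast; ring
    rw [e] at A
    simp only [Nat.cast_zero] at A
    rw [B, C] at A
    push_cast at A ⊢
    linear_combination -A
  have hB : ∏ j ∈ range (k+1), ((j:ℂ)-I*x) = (-(I*x)) * ∏ j ∈ range k, ((j:ℂ)+1-I*x) := by
    have A := prod_range_succ' (fun j : ℕ => (j:ℂ)-I*x) k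
    have e : ∏ j ∈ range k, ((((j:ℕ)+1:ℕ):ℂ)-I*x) = ∏ j ∈ range k, ((j:ℂ)+1-I*x) := by
      refine prod_congr rfl fun j _ => ?_; push_cast; ring
    rw [e] at A
    simp only [Nat.cast_zero] at A
    rw [A]; ring
  rw [hf, hB]
  linear_combination ((-(I*x)) * (∏ j ∈ range k, ((j:ℂ)+1-I*x))) * hA

lemma oddKeyAux (a b c w u v Qq Rq : ℂ) (k : ℕ)
    (hQ : (1 - w)*Qq = ((k:ℂ)+2-w) * (((k:ℂ)+1-w) * (u * (w * v))))
    (hR : (1 + w)*Rq = (-w) * (u * (((k:ℂ)+2+w) * (((k:ℂ)+1+w) * v)))) :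
    2*(2*w+1) * ((w-a)*(w-b)*(w-c)) * ((1-w) * Qq)
      - 2*(2*w-1) * ((w+a)*(w+b)*(w+c)) * ((1+w) * Rq)
      - (2*(2*w-1)*((w+a)*(w+b)*(w+c)) + 2*(2*w+1)*((w-a)*(w-b)*(w-c))
          - (2*(2*w+1))*(2*(2*w-1))*(a*b+a*c+b*c+w^2)) *
          (w * (((k:ℂ)+1-w)*(((k:ℂ)+1+w)*(u*v))))
      = -((2*(2*w+1))*(2*(2*w-1))) * w *
          (((k:ℂ)+1)*((k:ℂ)+1+a+b+c)*(((k:ℂ)+1-w)*(((k:ℂ)+1+w)*(u*v)))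
            - ((k:ℂ)+1)*(((k:ℂ)+1+a)*(((k:ℂ)+1+b)*(((k:ℂ)+1+c)*(u*v))))) := by
  rw [hQ, hR]; ring

lemma oddKeyStep (a b c x : ℂ) (k : ℕ) (w u v Qq Rq : ℂ) (hw : w = I*x)
    (hQ : (1 - w)*Qq = ((k:ℂ)+2-w) * (((k:ℂ)+1-w) * (u * (w * v))))
    (hR : (1 + w)*Rq = (-w) * (u * (((k:ℂ)+2+w) * (((k:ℂ)+1+w) * v)))) :
    2*(2*w+1) * ((w-a)*(w-b)*(w-c)) * ((x+I) * Qq)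
      + 2*(2*w-1) * ((w+a)*(w+b)*(w+c)) * ((x-I) * Rq)
      + (2*(2*w-1)*((w+a)*(w+b)*(w+c)) + 2*(2*w+1)*((w-a)*(w-b)*(w-c))
          - (2*(2*w+1))*(2*(2*w-1))*(a*b+a*c+b*c-x^2)) *
          (x * (((k:ℂ)+1-w)*(((k:ℂ)+1+w)*(u*v))))
      = (2*(2*w+1))*(2*(2*w-1)) * x *
          (((k:ℂ)+1)*((k:ℂ)+1+a+b+c)*(((k:ℂ)+1-w)*(((k:ℂ)+1+w)*(u*v)))
            - ((k:ℂ)+1)*(((k:ℂ)+1+a)*(((k:ℂ)+1+b)*(((k:ℂ)+1+c)*(u*v))))) := by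
  have hxp : x + I = I*(1-w) := by rw [hw]; linear_combination (x)*Complex.I_sq
  have hxm : x - I = -I*(1+w) := by rw [hw]; linear_combination (x)*Complex.I_sq
  have hx2 : x^2 = -(w^2) := by rw [hw]; linear_combination (x^2)*Complex.I_sq
  have hx0 : x = -(I*w) := by rw [hw]; linear_combination (x)*Complex.I_sq
  rw [hxp, hxm, hx2, hx0]
  linear_combination I * oddKeyAux a b c w u v Qq Rq k hQ hR

lemma oddKey0 (a b c x w : ℂ) (hw : w = I*x) :
    2*(2*w+1) * ((w-a)*(w-b)*(w-c)) * (x+I)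
      + 2*(2*w-1) * ((w+a)*(w+b)*(w+c)) * (x-I)
      + (2*(2*w-1)*((w+a)*(w+b)*(w+c)) + 2*(2*w+1)*((w-a)*(w-b)*(w-c))
          - (2*(2*w+1))*(2*(2*w-1))*(a*b+a*c+b*c-x^2)) * x = 0 := by
  have hxp : x + I = I*(1-w) := by rw [hw]; linear_combination (x)*Complex.I_sq
  have hxm : x - I = -I*(1+w) := by rw [hw]; linear_combination (x)*Complex.I_sq
  have hx2 : x^2 = -(w^2) := by rw [hw]; linear_combination (x^2)*Complex.I_sq
  have hx0 : x = -(I*w) := by rw [hw]; linear_combination (x)*Complex.I_sq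
  rw [hxp, hxm, hx2, hx0]
  ring

lemma evenCore (a b c x : ℂ) (m : ℕ) (cc : ℕ → ℂ)
    (hrec : ∀ k : ℕ, cc (k+1) * (((k:ℂ)+1)*(((k:ℂ)+a)*(((k:ℂ)+b)*((k:ℂ)+c))))
        = cc k * (((k:ℂ)-(m:ℂ))*((m:ℂ)+a+b+c-1+(k:ℂ))))
    (h1 : (2:ℂ)*(2*I*x+1) ≠ 0) (h2 : (2:ℂ)*(2*I*x-1) ≠ 0) :
    ((I*x-a)*(I*x-b)*(I*x-c)/(2*(2*I*x-1))) *
        (∑ k ∈ range (m+1), cc k * ∏ j ∈ range k, ((j:ℂ)^2+(x+I)^2))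
      + ((I*x+a)*(I*x+b)*(I*x+c)/(2*(2*I*x+1))) *
        (∑ k ∈ range (m+1), cc k * ∏ j ∈ range k, ((j:ℂ)^2+(x-I)^2))
      - ((I*x-a)*(I*x-b)*(I*x-c)/(2*(2*I*x-1)) + (I*x+a)*(I*x+b)*(I*x+c)/(2*(2*I*x+1))) *
        (∑ k ∈ range (m+1), cc k * ∏ j ∈ range k, ((j:ℂ)^2+x^2))
      = ((m:ℂ)^2+(a+b+c-1)*(m:ℂ)) *
        ∑ k ∈ range (m+1), cc k * ∏ j ∈ range k, ((j:ℂ)^2+x^2) := by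
  have h12 : ((2:ℂ)*(2*I*x+1)) * ((2:ℂ)*(2*I*x-1)) ≠ 0 := mul_ne_zero h1 h2
  have perk : ∀ k : ℕ,
      ((I*x-a)*(I*x-b)*(I*x-c)/(2*(2*I*x-1))) *
          ((∏ j ∈ range k, ((j:ℂ)^2+(x+I)^2)) - ∏ j ∈ range k, ((j:ℂ)^2+x^2))
        + ((I*x+a)*(I*x+b)*(I*x+c)/(2*(2*I*x+1))) *
          ((∏ j ∈ range k, ((j:ℂ)^2+(x-I)^2)) - ∏ j ∈ range k, ((j:ℂ)^2+x^2))
        = (k:ℂ)*((k:ℂ)-1+(a+b+c)) * ∏ j ∈ range k, ((j:ℂ)^2+x^2)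
          - (k:ℂ)*(((k:ℂ)-1+a)*(((k:ℂ)-1+b)*((k:ℂ)-1+c))) * ∏ j ∈ range (k-1), ((j:ℂ)^2+x^2) := by
    intro k
    cases k with
    | zero => simp
    | succ k =>
        have hcl := evenKeyAll a b c k x
        have hb1 : (I*x-a)*(I*x-b)*(I*x-c)/(2*(2*I*x-1)) * (2*(2*I*x-1))
            = (I*x-a)*(I*x-b)*(I*x-c) := div_mul_cancel₀ _ h2
        have ha1 : (I*x+a)*(I*x+b)*(I*x+c)/(2*(2*I*x+1)) * (2*(2*I*x+1))
            = (I*x+a)*(I*x+b)*(I*x+c) := div_mul_cancel₀ _ h1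
        refine mul_left_cancel₀ h12 ?_
        push_cast
        linear_combination hcl
          + ((2*(2*I*x+1)) * ((∏ j ∈ range (k+1), ((j:ℂ)^2+(x+I)^2))
              - ∏ j ∈ range (k+1), ((j:ℂ)^2+x^2))) * hb1
          + ((2*(2*I*x-1)) * ((∏ j ∈ range (k+1), ((j:ℂ)^2+(x-I)^2))
              - ∏ j ∈ range (k+1), ((j:ℂ)^2+x^2))) * ha1
  have expand :
      ((I*x-a)*(I*x-b)*(I*x-c)/(2*(2*I*x-1))) *
          (∑ k ∈ range (m+1), cc k * ∏ j ∈ range k, ((j:ℂ)^2+(x+I)^2))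
        + ((I*x+a)*(I*x+b)*(I*x+c)/(2*(2*I*x+1))) *
          (∑ k ∈ range (m+1), cc k * ∏ j ∈ range k, ((j:ℂ)^2+(x-I)^2))
        - ((I*x-a)*(I*x-b)*(I*x-c)/(2*(2*I*x-1)) + (I*x+a)*(I*x+b)*(I*x+c)/(2*(2*I*x+1))) *
          (∑ k ∈ range (m+1), cc k * ∏ j ∈ range k, ((j:ℂ)^2+x^2))
      = ∑ k ∈ range (m+1), cc k *
          (((I*x-a)*(I*x-b)*(I*x-c)/(2*(2*I*x-1))) *
              ((∏ j ∈ range k, ((j:ℂ)^2+(x+I)^2)) - ∏ j ∈ range k, ((j:ℂ)^2+x^2))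
            + ((I*x+a)*(I*x+b)*(I*x+c)/(2*(2*I*x+1))) *
              ((∏ j ∈ range k, ((j:ℂ)^2+(x-I)^2)) - ∏ j ∈ range k, ((j:ℂ)^2+x^2))) := by
    rw [Finset.mul_sum, Finset.mul_sum, Finset.mul_sum, ← Finset.sum_add_distrib,
      ← Finset.sum_sub_distrib]
    exact sum_congr rfl fun k _ => by ring
  rw [expand]
  have e1 : ∑ k ∈ range (m+1), cc k *
      (((I*x-a)*(I*x-b)*(I*x-c)/(2*(2*I*x-1))) *
          ((∏ j ∈ range k, ((j:ℂ)^2+(x+I)^2)) - ∏ j ∈ range k, ((j:ℂ)^2+x^2))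
        + ((I*x+a)*(I*x+b)*(I*x+c)/(2*(2*I*x+1))) *
          ((∏ j ∈ range k, ((j:ℂ)^2+(x-I)^2)) - ∏ j ∈ range k, ((j:ℂ)^2+x^2)))
      = (∑ k ∈ range (m+1), cc k * ((k:ℂ)*((k:ℂ)-1+(a+b+c))) * ∏ j ∈ range k, ((j:ℂ)^2+x^2))
        - ∑ k ∈ range (m+1), cc k * ((k:ℂ)*(((k:ℂ)-1+a)*(((k:ℂ)-1+b)*((k:ℂ)-1+c)))) * ∏ j ∈ range (k-1), ((j:ℂ)^2+x^2) := by
    rw [← Finset.sum_sub_distrib]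
    refine sum_congr rfl fun k _ => ?_
    rw [perk k]; ring
  have e2 := Finset.sum_range_succ
    (fun k => cc k * ((k:ℂ)*((k:ℂ)-1+(a+b+c))) * ∏ j ∈ range k, ((j:ℂ)^2+x^2)) m
  have e3 := Finset.sum_range_succ'
    (fun k => cc k * ((k:ℂ)*(((k:ℂ)-1+a)*(((k:ℂ)-1+b)*((k:ℂ)-1+c)))) * ∏ j ∈ range (k-1), ((j:ℂ)^2+x^2)) m
  have e4 : cc 0 * (((0:ℕ):ℂ)*((((0:ℕ):ℂ))-1+(a+b+c))) * ∏ j ∈ range (0-1), ((j:ℂ)^2+x^2) = 0 := by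
    simp
  have e5 : ∑ k ∈ range m,
      cc k * ((k:ℂ)*((k:ℂ)-1+(a+b+c))) * ∏ j ∈ range k, ((j:ℂ)^2+x^2)
      = ∑ k ∈ range m,
        (((m:ℂ)^2+(a+b+c-1)*(m:ℂ)) * (cc k * ∏ j ∈ range k, ((j:ℂ)^2+x^2))
          + cc (k+1) * ((((k+1:ℕ)):ℂ)*((((((k+1:ℕ)):ℂ))-1+a)*((((((k+1:ℕ)):ℂ))-1+b)*(((((k+1:ℕ)):ℂ))-1+c)))) * ∏ j ∈ range ((k+1)-1), ((j:ℂ)^2+x^2)) := by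
    refine sum_congr rfl fun k _ => ?_
    simp only [Nat.add_sub_cancel]
    push_cast
    linear_combination (-(∏ j ∈ range k, ((j:ℂ)^2+x^2))) * hrec k
  have e6 := Finset.sum_add_distrib (s := range m)
    (f := fun k => ((m:ℂ)^2+(a+b+c-1)*(m:ℂ)) * (cc k * ∏ j ∈ range k, ((j:ℂ)^2+x^2)))
    (g := fun k => cc (k+1) * ((((k+1:ℕ)):ℂ)*((((((k+1:ℕ)):ℂ))-1+a)*((((((k+1:ℕ)):ℂ))-1+b)*(((((k+1:ℕ)):ℂ))-1+c)))) * ∏ j ∈ range ((k+1)-1), ((j:ℂ)^2+x^2))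
  have e7 := Finset.sum_range_succ (fun k => cc k * ∏ j ∈ range k, ((j:ℂ)^2+x^2)) m
  have e8 := Finset.mul_sum (range m)
    (fun k => cc k * ∏ j ∈ range k, ((j:ℂ)^2+x^2)) ((m:ℂ)^2+(a+b+c-1)*(m:ℂ))
  linear_combination e1 + e2 - e3 - e4 + e5 + e6 - e8 - ((m:ℂ)^2+(a+b+c-1)*(m:ℂ))*e7

set_option maxHeartbeats 1000000 in
lemma evenCoeff (a b c : ℂ) (ha : 0 < a.re) (hb : 0 < b.re) (hc : 0 < c.re) (m k : ℕ) :
    (pochC (-(m:ℂ)) (k+1) * pochC ((m:ℂ)+a+b+c-1) (k+1) /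
        (pochC a (k+1) * pochC b (k+1) * pochC c (k+1) * ((k+1).factorial : ℂ)))
      * (((k:ℂ)+1)*(((k:ℂ)+a)*(((k:ℂ)+b)*((k:ℂ)+c))))
    = (pochC (-(m:ℂ)) k * pochC ((m:ℂ)+a+b+c-1) k /
        (pochC a k * pochC b k * pochC c k * (k.factorial : ℂ)))
      * (((k:ℂ)-(m:ℂ))*((m:ℂ)+a+b+c-1+(k:ℂ))) := by
  rw [pochC_succ, pochC_succ, pochC_succ, pochC_succ, pochC_succ]
  have hfa := pochC_ne_zero_of_pos_re ha k
  have hfb := pochC_ne_zero_of_pos_re hb k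
  have hfc := pochC_ne_zero_of_pos_re hc k
  have hna := add_nat_ne_zero ha k
  have hnb := add_nat_ne_zero hb k
  have hnc := add_nat_ne_zero hc k
  have hfk : ((k.factorial : ℂ)) ≠ 0 := by exact_mod_cast k.factorial_ne_zero
  have hfk1 : (((k+1).factorial : ℂ)) ≠ 0 := by exact_mod_cast (k+1).factorial_ne_zero
  rw [div_mul_eq_mul_div, div_mul_eq_mul_div, div_eq_div_iff
    (mul_ne_zero (mul_ne_zero (mul_ne_zero (mul_ne_zero hfa hna) (mul_ne_zero hfb hnb))
      (mul_ne_zero hfc hnc)) hfk1)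
    (mul_ne_zero (mul_ne_zero (mul_ne_zero hfa hfb) hfc) hfk)]
  rw [Nat.factorial_succ]
  push_cast
  ring

set_option maxHeartbeats 1000000 in
lemma oddCoeff (a b c : ℂ) (ha : 0 < a.re) (hb : 0 < b.re) (hc : 0 < c.re) (m k : ℕ) :
    (pochC (-(m:ℂ)) (k+1) * pochC ((m:ℂ)+a+b+c) (k+1) /
        (pochC (1+a) (k+1) * pochC (1+b) (k+1) * pochC (1+c) (k+1) * ((k+1).factorial : ℂ)))
      * (((k:ℂ)+1)*(((k:ℂ)+1+a)*(((k:ℂ)+1+b)*((k:ℂ)+1+c))))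
    = (pochC (-(m:ℂ)) k * pochC ((m:ℂ)+a+b+c) k /
        (pochC (1+a) k * pochC (1+b) k * pochC (1+c) k * (k.factorial : ℂ)))
      * (((k:ℂ)-(m:ℂ))*((m:ℂ)+a+b+c+(k:ℂ))) := by
  have ha1 : 0 < (1+a).re := by simp [Complex.add_re]; linarith
  have hb1 : 0 < (1+b).re := by simp [Complex.add_re]; linarith
  have hc1 : 0 < (1+c).re := by simp [Complex.add_re]; linarith
  rw [pochC_succ, pochC_succ, pochC_succ, pochC_succ, pochC_succ]
  have hfa := pochC_ne_zero_of_pos_re ha1 k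
  have hfb := pochC_ne_zero_of_pos_re hb1 k
  have hfc := pochC_ne_zero_of_pos_re hc1 k
  have hna := add_nat_ne_zero ha1 k
  have hnb := add_nat_ne_zero hb1 k
  have hnc := add_nat_ne_zero hc1 k
  have hfk : ((k.factorial : ℂ)) ≠ 0 := by exact_mod_cast k.factorial_ne_zero
  have hfk1 : (((k+1).factorial : ℂ)) ≠ 0 := by exact_mod_cast (k+1).factorial_ne_zero
  rw [div_mul_eq_mul_div, div_mul_eq_mul_div, div_eq_div_iff
    (mul_ne_zero (mul_ne_zero (mul_ne_zero (mul_ne_zero hfa hna) (mul_ne_zero hfb hnb))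
      (mul_ne_zero hfc hnc)) hfk1)
    (mul_ne_zero (mul_ne_zero (mul_ne_zero hfa hfb) hfc) hfk)]
  rw [Nat.factorial_succ]
  push_cast
  ring

set_option maxHeartbeats 2000000 in
lemma oddCore (a b c x : ℂ) (m : ℕ) (cc : ℕ → ℂ)
    (hrec : ∀ k : ℕ, cc (k+1) * (((k:ℂ)+1)*(((k:ℂ)+1+a)*(((k:ℂ)+1+b)*((k:ℂ)+1+c))))
        = cc k * (((k:ℂ)-(m:ℂ))*((m:ℂ)+a+b+c+(k:ℂ))))
    (h1 : (2:ℂ)*(2*I*x+1) ≠ 0) (h2 : (2:ℂ)*(2*I*x-1) ≠ 0) :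
    ((I*x-a)*(I*x-b)*(I*x-c)/(2*(2*I*x-1))) *
        ((x+I) * ∑ k ∈ range (m+1), cc k * ∏ j ∈ range k, (((j:ℂ)+1)^2+(x+I)^2))
      + ((I*x+a)*(I*x+b)*(I*x+c)/(2*(2*I*x+1))) *
        ((x-I) * ∑ k ∈ range (m+1), cc k * ∏ j ∈ range k, (((j:ℂ)+1)^2+(x-I)^2))
      + ((I*x-a)*(I*x-b)*(I*x-c)/(2*(2*I*x-1)) + (I*x+a)*(I*x+b)*(I*x+c)/(2*(2*I*x+1))
          - (a*b+a*c+b*c-x^2)) *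
        (x * ∑ k ∈ range (m+1), cc k * ∏ j ∈ range k, (((j:ℂ)+1)^2+x^2))
      = ((m:ℂ)^2+(a+b+c)*(m:ℂ)) *
        (x * ∑ k ∈ range (m+1), cc k * ∏ j ∈ range k, (((j:ℂ)+1)^2+x^2)) := by
  have h12 : ((2:ℂ)*(2*I*x+1)) * ((2:ℂ)*(2*I*x-1)) ≠ 0 := mul_ne_zero h1 h2
  have hb1 : (I*x-a)*(I*x-b)*(I*x-c)/(2*(2*I*x-1)) * (2*(2*I*x-1))
      = (I*x-a)*(I*x-b)*(I*x-c) := div_mul_cancel₀ _ h2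
  have ha1 : (I*x+a)*(I*x+b)*(I*x+c)/(2*(2*I*x+1)) * (2*(2*I*x+1))
      = (I*x+a)*(I*x+b)*(I*x+c) := div_mul_cancel₀ _ h1
  have perk : ∀ k : ℕ,
      ((I*x-a)*(I*x-b)*(I*x-c)/(2*(2*I*x-1))) *
          ((x+I) * ∏ j ∈ range k, (((j:ℂ)+1)^2+(x+I)^2))
        + ((I*x+a)*(I*x+b)*(I*x+c)/(2*(2*I*x+1))) *
          ((x-I) * ∏ j ∈ range k, (((j:ℂ)+1)^2+(x-I)^2))
        + ((I*x-a)*(I*x-b)*(I*x-c)/(2*(2*I*x-1)) + (I*x+a)*(I*x+b)*(I*x+c)/(2*(2*I*x+1))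
            - (a*b+a*c+b*c-x^2)) *
          (x * ∏ j ∈ range k, (((j:ℂ)+1)^2+x^2))
        = x * ((k:ℂ)*((k:ℂ)+(a+b+c))) * ∏ j ∈ range k, (((j:ℂ)+1)^2+x^2)
          - x * ((k:ℂ)*(((k:ℂ)+a)*(((k:ℂ)+b)*((k:ℂ)+c)))) * ∏ j ∈ range (k-1), (((j:ℂ)+1)^2+x^2) := by
    intro k
    cases k with
    | zero =>
        simp only [prod_range_zero, Nat.cast_zero, mul_one, zero_mul, mul_zero, Nat.zero_sub,
          sub_zero, zero_sub, neg_zero]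
        refine mul_left_cancel₀ h12 ?_
        linear_combination (oddKey0 a b c x (I*x) rfl)
          + ((2*(2*I*x+1))*((x+I)+x))*hb1 + ((2*(2*I*x-1))*((x-I)+x))*ha1
    | succ k =>
        have hstep := oddKeyStep a b c x k (I*x)
          (∏ j ∈ range k, ((j:ℂ)+1-I*x)) (∏ j ∈ range k, ((j:ℂ)+1+I*x))
          (∏ j ∈ range (k+1), (((j:ℂ)+1)^2+(x+I)^2))
          (∏ j ∈ range (k+1), (((j:ℂ)+1)^2+(x-I)^2))
          rfl (oddShiftQ x k) (oddShiftR x k)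
        simp only [Nat.add_sub_cancel]
        rw [oddq1 x k, oddFactq x k]
        refine mul_left_cancel₀ h12 ?_
        push_cast
        linear_combination hstep
          + ((2*(2*I*x+1))*((x+I) * (∏ j ∈ range (k+1), (((j:ℂ)+1)^2+(x+I)^2))
              + x * (((k:ℂ)+1-I*x) * (((k:ℂ)+1+I*x) *
                  ((∏ j ∈ range k, ((j:ℂ)+1-I*x)) * (∏ j ∈ range k, ((j:ℂ)+1+I*x)))))))*hb1
          + ((2*(2*I*x-1))*((x-I) * (∏ j ∈ range (k+1), (((j:ℂ)+1)^2+(x-I)^2))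
              + x * (((k:ℂ)+1-I*x) * (((k:ℂ)+1+I*x) *
                  ((∏ j ∈ range k, ((j:ℂ)+1-I*x)) * (∏ j ∈ range k, ((j:ℂ)+1+I*x)))))))*ha1
  have expand :
      ((I*x-a)*(I*x-b)*(I*x-c)/(2*(2*I*x-1))) *
          ((x+I) * ∑ k ∈ range (m+1), cc k * ∏ j ∈ range k, (((j:ℂ)+1)^2+(x+I)^2))
        + ((I*x+a)*(I*x+b)*(I*x+c)/(2*(2*I*x+1))) *
          ((x-I) * ∑ k ∈ range (m+1), cc k * ∏ j ∈ range k, (((j:ℂ)+1)^2+(x-I)^2))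
        + ((I*x-a)*(I*x-b)*(I*x-c)/(2*(2*I*x-1)) + (I*x+a)*(I*x+b)*(I*x+c)/(2*(2*I*x+1))
            - (a*b+a*c+b*c-x^2)) *
          (x * ∑ k ∈ range (m+1), cc k * ∏ j ∈ range k, (((j:ℂ)+1)^2+x^2))
      = ∑ k ∈ range (m+1), cc k *
          (((I*x-a)*(I*x-b)*(I*x-c)/(2*(2*I*x-1))) *
              ((x+I) * ∏ j ∈ range k, (((j:ℂ)+1)^2+(x+I)^2))
            + ((I*x+a)*(I*x+b)*(I*x+c)/(2*(2*I*x+1))) *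
              ((x-I) * ∏ j ∈ range k, (((j:ℂ)+1)^2+(x-I)^2))
            + ((I*x-a)*(I*x-b)*(I*x-c)/(2*(2*I*x-1)) + (I*x+a)*(I*x+b)*(I*x+c)/(2*(2*I*x+1))
                - (a*b+a*c+b*c-x^2)) *
              (x * ∏ j ∈ range k, (((j:ℂ)+1)^2+x^2))) := by
    simp only [Finset.mul_sum]
    rw [← Finset.sum_add_distrib, ← Finset.sum_add_distrib]
    refine sum_congr rfl fun k _ => ?_
    ring
  rw [expand]
  have e1 : ∑ k ∈ range (m+1), cc k *
      (((I*x-a)*(I*x-b)*(I*x-c)/(2*(2*I*x-1))) *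
          ((x+I) * ∏ j ∈ range k, (((j:ℂ)+1)^2+(x+I)^2))
        + ((I*x+a)*(I*x+b)*(I*x+c)/(2*(2*I*x+1))) *
          ((x-I) * ∏ j ∈ range k, (((j:ℂ)+1)^2+(x-I)^2))
        + ((I*x-a)*(I*x-b)*(I*x-c)/(2*(2*I*x-1)) + (I*x+a)*(I*x+b)*(I*x+c)/(2*(2*I*x+1))
            - (a*b+a*c+b*c-x^2)) *
          (x * ∏ j ∈ range k, (((j:ℂ)+1)^2+x^2)))
      = (∑ k ∈ range (m+1), cc k * (x*((k:ℂ)*((k:ℂ)+(a+b+c)))) * ∏ j ∈ range k, (((j:ℂ)+1)^2+x^2))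
        - ∑ k ∈ range (m+1), cc k * (x*((k:ℂ)*(((k:ℂ)+a)*(((k:ℂ)+b)*((k:ℂ)+c))))) * ∏ j ∈ range (k-1), (((j:ℂ)+1)^2+x^2) := by
    rw [← Finset.sum_sub_distrib]
    refine sum_congr rfl fun k _ => ?_
    rw [perk k]; ring
  have e2 := Finset.sum_range_succ
    (fun k => cc k * (x*((k:ℂ)*((k:ℂ)+(a+b+c)))) * ∏ j ∈ range k, (((j:ℂ)+1)^2+x^2)) m
  have e3 := Finset.sum_range_succ'
    (fun k => cc k * (x*((k:ℂ)*(((k:ℂ)+a)*(((k:ℂ)+b)*((k:ℂ)+c))))) * ∏ j ∈ range (k-1), (((j:ℂ)+1)^2+x^2)) m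
  have e4 : cc 0 * (x*(((0:ℕ):ℂ)*((((0:ℕ):ℂ))+(a+b+c)))) * ∏ j ∈ range (0-1), (((j:ℂ)+1)^2+x^2) = 0 := by
    simp
  have e5 : ∑ k ∈ range m,
      cc k * (x*((k:ℂ)*((k:ℂ)+(a+b+c)))) * ∏ j ∈ range k, (((j:ℂ)+1)^2+x^2)
      = ∑ k ∈ range m,
        ((x*((m:ℂ)^2+(a+b+c)*(m:ℂ))) * (cc k * ∏ j ∈ range k, (((j:ℂ)+1)^2+x^2))
          + cc (k+1) * (x*((((k+1:ℕ)):ℂ)*(((((k+1:ℕ)):ℂ)+a)*(((((k+1:ℕ)):ℂ)+b)*((((k+1:ℕ)):ℂ)+c))))) * ∏ j ∈ range ((k+1)-1), (((j:ℂ)+1)^2+x^2)) := by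
    refine sum_congr rfl fun k _ => ?_
    simp only [Nat.add_sub_cancel]
    push_cast
    linear_combination (-(x * ∏ j ∈ range k, (((j:ℂ)+1)^2+x^2))) * hrec k
  have e6 := Finset.sum_add_distrib (s := range m)
    (f := fun k => (x*((m:ℂ)^2+(a+b+c)*(m:ℂ))) * (cc k * ∏ j ∈ range k, (((j:ℂ)+1)^2+x^2)))
    (g := fun k => cc (k+1) * (x*((((k+1:ℕ)):ℂ)*(((((k+1:ℕ)):ℂ)+a)*(((((k+1:ℕ)):ℂ)+b)*((((k+1:ℕ)):ℂ)+c))))) * ∏ j ∈ range ((k+1)-1), (((j:ℂ)+1)^2+x^2))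
  have e7 := Finset.sum_range_succ (fun k => cc k * ∏ j ∈ range k, (((j:ℂ)+1)^2+x^2)) m
  have e8 := Finset.mul_sum (range m)
    (fun k => cc k * ∏ j ∈ range k, (((j:ℂ)+1)^2+x^2)) (x*((m:ℂ)^2+(a+b+c)*(m:ℂ)))
  linear_combination e1 + e2 - e3 - e4 + e5 + e6 - e8 - (x*((m:ℂ)^2+(a+b+c)*(m:ℂ)))*e7

set_option maxHeartbeats 2000000 in
/-- the generalized symmetric Bannai–Ito polynomials are eigenfunctions
of the Dunkl-type difference operator `D_σ = D₀ + (σ/2)(I - R)`. -/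
theorem gsBannaiIto_difference_equation (a b c σ : ℂ)
    (ha : a.re > 0) (hb : b.re > 0) (hc : c.re > 0)
    (n : ℕ) (x : ℂ) (hx1 : 2 * I * x ≠ 1) (hx2 : 2 * I * x ≠ -1) :
    ((I * x - a) * (I * x - b) * (I * x - c) / (2 * (2 * I * x - 1))) *
          (gsBI a b c n).eval (x + I)
      + ((I * x + a) * (I * x + b) * (I * x + c) / (2 * (2 * I * x + 1))) *
          (gsBI a b c n).eval (x - I)
      + ((a * b + a * c + b * c - x ^ 2) / 2
          - (I * x + a) * (I * x + b) * (I * x + c) / (2 * (2 * I * x + 1))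
          - (I * x - a) * (I * x - b) * (I * x - c) / (2 * (2 * I * x - 1))) *
          (gsBI a b c n).eval (-x)
      - ((I * x + a) * (I * x + b) * (I * x + c) / (2 * (2 * I * x + 1))
          + (I * x - a) * (I * x - b) * (I * x - c) / (2 * (2 * I * x - 1))
          + ((a * b + a * c + b * c - x ^ 2) / 2
            - (I * x + a) * (I * x + b) * (I * x + c) / (2 * (2 * I * x + 1))
            - (I * x - a) * (I * x - b) * (I * x - c) / (2 * (2 * I * x - 1)))) *
          (gsBI a b c n).eval x
      + (σ / 2) * ((gsBI a b c n).eval x - (gsBI a b c n).eval (-x))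
      = gsBIeigen a b c σ n * (gsBI a b c n).eval x := by
  
  have hAd : (2:ℂ)*(2*I*x+1) ≠ 0 := by
    intro h
    rcases mul_eq_zero.mp h with h' | h'
    · exact two_ne_zero h'
    · exact hx2 (by linear_combination h')
  have hBd : (2:ℂ)*(2*I*x-1) ≠ 0 := by
    intro h
    rcases mul_eq_zero.mp h with h' | h'
    · exact two_ne_zero h'
    · exact hx1 (by linear_combination h')
  rcases Nat.even_or_odd n with he | ho
  · obtain ⟨m, rfl⟩ := he
    have hev : Even (m+m) := ⟨m, rfl⟩
    have hn2 : (m+m)/2 = m := by omega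
    simp only [gsBI, gsBIeigen, hn2, if_pos hev]
    simp only [eval_mul, eval_C, Polynomial.eval_finset_sum, Polynomial.eval_prod, eval_add,
      eval_pow, eval_X, neg_sq]
    have core := evenCore a b c x m
      (fun k => pochC (-(m:ℂ)) k * pochC ((m:ℂ)+a+b+c-1) k /
        (pochC a k * pochC b k * pochC c k * (k.factorial : ℂ)))
      (fun k => evenCoeff a b c ha hb hc m k) hAd hBd
    linear_combination ((-1:ℂ)^m * pochC a m * pochC b m * pochC c m /
        pochC ((m:ℂ)+a+b+c-1) m) * core
  · obtain ⟨m, rfl⟩ := ho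
    have hodd : ¬ Even (2*m+1) := by
      rintro ⟨t, ht⟩; omega
    have hn2 : (2*m+1)/2 = m := by omega
    simp only [gsBI, gsBIeigen, hn2, if_neg hodd]
    simp only [eval_mul, eval_C, Polynomial.eval_finset_sum, Polynomial.eval_prod, eval_add,
      eval_pow, eval_X, neg_sq]
    have conv : ∀ z : ℂ, ∀ k : ℕ, ∏ j ∈ Icc 1 k, ((j:ℂ)^2+z^2)
        = ∏ j ∈ range k, (((j:ℂ)+1)^2+z^2) := by
      intro z k
      rw [prod_Icc_one (fun j => (j:ℂ)^2+z^2) k]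
      exact prod_congr rfl fun j _ => by push_cast; ring
    simp only [conv]
    have core := oddCore a b c x m
      (fun k => pochC (-(m:ℂ)) k * pochC ((m:ℂ)+a+b+c) k /
        (pochC (1+a) k * pochC (1+b) k * pochC (1+c) k * (k.factorial : ℂ)))
      (fun k => oddCoeff a b c ha hb hc m k) hAd hBd
    linear_combination ((-1:ℂ)^m * pochC (1+a) m * pochC (1+b) m * pochC (1+c) m /
        pochC ((m:ℂ)+a+b+c) m) * core
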